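/- Let g, h : Ω → ℝ be twice continuously differentiable on a domain Ω ⊆ ℝ^d with second derivatives bounded in operator norm by C. Suppose x, y ∈ Ω with the segment [y, x] ⊂ Ω, ‖x − y‖ ≤ ε₁, |h(y) − g(y)| ≤ Cε₁², |h(x) − g(x)| ≤ Cε₁², and (∇h(y) − ∇g(y))·(x − y) ≥ (1/2)·‖∇h(y) − ∇g(y)‖·‖x − y‖ with ‖x − y‖ ≥ ε₁/2. Then ‖∇h(y) − ∇g(y)‖ ≤ 16·C·ε₁. -/

import Mathlib

/-!
Along the segment from `y` to `x`, the first-order Taylor remainders of `h` and `g` are at most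
`C ε₁²` each, and by hypothesis so are `h - g` at both endpoints; hence the directional derivative
`⟪∇h y - ∇g y, x - y⟫` is at most `4 C ε₁²`. The cone condition and `‖x - y‖ ≥ ε₁ / 2` bound the
same quantity from below by `‖∇h y - ∇g y‖ ε₁ / 4`.
-/

open scoped RealInnerProductSpace

section Taylor

variable {E F : Type*} [NormedAddCommGroup E] [NormedSpace ℝ E]
  [NormedAddCommGroup F] [NormedSpace ℝ F] {Ω : Set E} {f : E → F} {C : ℝ}

lemma norm_fderiv_fderiv_eq_norm_iteratedFDerivWithin_two (hΩ : IsOpen Ω) {z : E} (hz : z ∈ Ω) :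
    ‖fderiv ℝ (fderiv ℝ f) z‖ = ‖iteratedFDerivWithin ℝ 2 f Ω z‖ := by
  rw [iteratedFDerivWithin_of_isOpen 2 hΩ hz, ← norm_iteratedFDeriv_fderiv,
    ← norm_iteratedFDeriv_fderiv, norm_iteratedFDeriv_zero]

lemma norm_sub_sub_fderiv_le_of_norm_iteratedFDerivWithin_two_le (hΩ : IsOpen Ω)
    (hf : ContDiffOn ℝ 2 f Ω) (hf2 : ∀ z ∈ Ω, ‖iteratedFDerivWithin ℝ 2 f Ω z‖ ≤ C)
    {x y : E} (hseg : segment ℝ y x ⊆ Ω) :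
    ‖f x - f y - fderiv ℝ f y (x - y)‖ ≤ C * ‖x - y‖ ^ 2 := by
  have hf_at : ∀ z ∈ Ω, ContDiffAt ℝ 2 f z := fun z hz => hf.contDiffAt (hΩ.mem_nhds hz)
  have hy : y ∈ segment ℝ y x := left_mem_segment ℝ y x
  have hC : 0 ≤ C := (norm_nonneg _).trans (hf2 y (hseg hy))
  have hfderiv_lip : ∀ z ∈ segment ℝ y x, ‖fderiv ℝ f z - fderiv ℝ f y‖ ≤ C * ‖x - y‖ := by
    intro z hz
    calc ‖fderiv ℝ f z - fderiv ℝ f y‖ ≤ C * ‖z - y‖ :=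
          (convex_segment y x).norm_image_sub_le_of_norm_fderiv_le
            (fun w hw => ((hf_at w (hseg hw)).fderiv_right (m := 1) le_rfl).differentiableAt
              one_ne_zero)
            (fun w hw => (norm_fderiv_fderiv_eq_norm_iteratedFDerivWithin_two hΩ (hseg hw)).trans_le
              (hf2 w (hseg hw)))
            hy hz
      _ ≤ C * ‖x - y‖ := by gcongr; exact norm_sub_le_of_mem_segment hz
  calc ‖f x - f y - fderiv ℝ f y (x - y)‖ ≤ C * ‖x - y‖ * ‖x - y‖ :=
        (convex_segment y x).norm_image_sub_le_of_norm_fderiv_le'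
          (fun w hw => (hf_at w (hseg hw)).differentiableAt two_ne_zero)
          hfderiv_lip hy (right_mem_segment ℝ y x)
    _ = C * ‖x - y‖ ^ 2 := by ring

end Taylor

lemma inner_gradient_eq_fderiv {F : Type*} [NormedAddCommGroup F] [InnerProductSpace ℝ F]
    [CompleteSpace F] (f : F → ℝ) (y v : F) : ⟪gradient f y, v⟫ = fderiv ℝ f y v :=
  InnerProductSpace.toDual_symm_apply

theorem stmt_8_general (d : ℕ) (Ω : Set (EuclideanSpace ℝ (Fin d))) (hΩ : IsOpen Ω)
    (g h : EuclideanSpace ℝ (Fin d) → ℝ) (C ε₁ : ℝ) (hε₁ : 0 < ε₁)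
    (hg : ContDiffOn ℝ 2 g Ω) (hh : ContDiffOn ℝ 2 h Ω)
    (hg2 : ∀ z ∈ Ω, ‖iteratedFDerivWithin ℝ 2 g Ω z‖ ≤ C)
    (hh2 : ∀ z ∈ Ω, ‖iteratedFDerivWithin ℝ 2 h Ω z‖ ≤ C)
    (x y : EuclideanSpace ℝ (Fin d))
    (hseg : segment ℝ y x ⊆ Ω)
    (hxy₁ : ‖x - y‖ ≤ ε₁) (hxy₂ : ε₁ / 2 ≤ ‖x - y‖)
    (hgy : |h y - g y| ≤ C * ε₁ ^ 2) (hgx : |h x - g x| ≤ C * ε₁ ^ 2)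
    (hcone : ⟪gradient h y - gradient g y, x - y⟫ ≥
      (1 / 2) * ‖gradient h y - gradient g y‖ * ‖x - y‖) :
    ‖gradient h y - gradient g y‖ ≤ 16 * C * ε₁ := by
  have hC : 0 ≤ C := (norm_nonneg _).trans (hh2 y (hseg (left_mem_segment ℝ y x)))
  have hsq_le : C * ‖x - y‖ ^ 2 ≤ C * ε₁ ^ 2 := by gcongr
  have hrem_h := abs_le.mp ((Real.norm_eq_abs _).symm.trans_le
    (norm_sub_sub_fderiv_le_of_norm_iteratedFDerivWithin_two_le hΩ hh hh2 hseg))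
  have hrem_g := abs_le.mp ((Real.norm_eq_abs _).symm.trans_le
    (norm_sub_sub_fderiv_le_of_norm_iteratedFDerivWithin_two_le hΩ hg hg2 hseg))
  have hdir : ⟪gradient h y - gradient g y, x - y⟫ ≤ 4 * C * ε₁ ^ 2 := by
    rw [inner_sub_left, inner_gradient_eq_fderiv, inner_gradient_eq_fderiv]
    linarith [hrem_h.1, hrem_g.2, (abs_le.mp hgx).2, (abs_le.mp hgy).1]
  have hmul : ‖gradient h y - gradient g y‖ * ε₁ ≤ 16 * C * ε₁ * ε₁ := by
    nlinarith [norm_nonneg (gradient h y - gradient g y)]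
  exact le_of_mul_le_mul_right hmul hε₁

/-- Gradient-approximation transfer via second-order Taylor expansion. -/
theorem stmt_8 (d : ℕ) (Ω : Set (EuclideanSpace ℝ (Fin d))) (hΩ : IsOpen Ω)
    (g h : EuclideanSpace ℝ (Fin d) → ℝ) (C ε₁ : ℝ) (hC : 0 < C) (hε₁ : 0 < ε₁)
    (hg : ContDiffOn ℝ 2 g Ω) (hh : ContDiffOn ℝ 2 h Ω)
    (hg2 : ∀ z ∈ Ω, ‖iteratedFDerivWithin ℝ 2 g Ω z‖ ≤ C)
    (hh2 : ∀ z ∈ Ω, ‖iteratedFDerivWithin ℝ 2 h Ω z‖ ≤ C)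
    (x y : EuclideanSpace ℝ (Fin d)) (hx : x ∈ Ω) (hy : y ∈ Ω)
    (hseg : segment ℝ y x ⊆ Ω)
    (hxy₁ : ‖x - y‖ ≤ ε₁) (hxy₂ : ε₁ / 2 ≤ ‖x - y‖)
    (hgy : |h y - g y| ≤ C * ε₁ ^ 2) (hgx : |h x - g x| ≤ C * ε₁ ^ 2)
    (hcone : ⟪gradient h y - gradient g y, x - y⟫ ≥
      (1 / 2) * ‖gradient h y - gradient g y‖ * ‖x - y‖) :
    ‖gradient h y - gradient g y‖ ≤ 16 * C * ε₁ :=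
  stmt_8_general d Ω hΩ g h C ε₁ hε₁ hg hh hg2 hh2 x y hseg hxy₁ hxy₂ hgy hgx hcone
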